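/- Let G = ⟨a⟩ be cyclic of order 2 and e ≥ 1. Then (a − 1)^2 = −2(a − 1) in Z_{2^e}G, the unit 1 + 2(a − 1) has order 2^{e−1}, and V(Z_{2^e}G) = ⟨a⟩ × ⟨1 + 2(a−1)⟩ ≅ C_2 × C_{2^{e−1}}. -/

import Mathlib

/-- The augmentation map of a group ring. -/
noncomputable def aug (R G : Type*) [CommRing R] [CommGroup G] :
    MonoidAlgebra R G →ₐ[R] R := MonoidAlgebra.lift (R := R) (M := G) (A := R) 1

/-- The group of normalized units of a group ring. -/
noncomputable def Vgrp (R G : Type*) [CommRing R] [CommGroup G] :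
    Subgroup (MonoidAlgebra R G)ˣ :=
  MonoidHom.ker (Units.map ((aug R G).toRingHom : MonoidAlgebra R G →* R))

/-- The canonical embedding of `G` into the unit group of its group ring. -/
noncomputable def iota (R G : Type*) [CommRing R] [CommGroup G] :
    G →* (MonoidAlgebra R G)ˣ :=
  (Units.map (MonoidAlgebra.of R G)).comp (toUnits : G ≃* Gˣ).toMonoidHom

/-!
Write `δ = a - 1`. Since `a² = 1` we have `δ² = -2δ`, so every unit of augmentation one has
the form `1 + sδ`, and `(1 + sδ)(1 + tδ) = 1 + (s + t - 2st)δ`. Hence `V` embeds into `ℤ/2^e`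
via `s`, and repeated squaring gives `(1 + 2δ)^(2^m) = 1 + 2^(m+1)cδ` with `c` odd, so
`u = 1 + 2δ` has order `2^(e-1)`. Powers of `u` have even `s` while `a·u^j` has odd `s`, so the
`2·2^(e-1) = 2^e` products `a^i u^j` are distinct and, as `|V| ≤ 2^e`, exhaust `V`.
-/

theorem orderOf_eq_prime_pow_of_forall {M : Type*} [Monoid M] {x : M} {p k : ℕ} [Fact p.Prime]
    (h : ∀ m, x ^ p ^ m = 1 ↔ k ≤ m) : orderOf x = p ^ k := by
  cases k with
  | zero => simpa using (h 0).2 le_rfl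
  | succ n => exact orderOf_eq_prime_pow (by rw [h]; omega) ((h _).2 le_rfl)

namespace ZMod

theorem intCast_two_pow_mul_eq_zero_iff {e n : ℕ} {c : ℤ} (hc : Odd c) :
    ((2 ^ n * c : ℤ) : ZMod (2 ^ e)) = 0 ↔ e ≤ n := by
  rw [intCast_zmod_eq_zero_iff_dvd]
  push_cast
  refine ⟨fun h => ?_, fun h => (pow_dvd_pow 2 h).mul_right c⟩
  have h2c : ¬ (2 : ℤ) ∣ c := by rwa [← even_iff_two_dvd, Int.not_even_iff_odd]
  exact (pow_dvd_pow_iff Int.prime_two.ne_zero Int.prime_two.not_isUnit).1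
    (Int.prime_two.pow_dvd_of_dvd_mul_right e h2c h)

theorem two_mul_ne_one_sub_two_mul {e : ℕ} (he : e ≠ 0) (s t : ZMod (2 ^ e)) :
    2 * s ≠ 1 - 2 * t := by
  intro h
  have h2 := congrArg (castHom (dvd_pow_self 2 he) (ZMod 2)) h
  simp only [map_mul, map_sub, map_one, map_ofNat] at h2
  rw [show (2 : ZMod 2) = 0 from rfl] at h2
  simp at h2

end ZMod

open MonoidAlgebra

namespace GroupRingOfOrderTwo

variable {R G : Type*} [CommRing R] [CommGroup G] {a : G}

theorem of_sub_one_sq (ha : a * a = 1) :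
    (of R G a - 1) ^ 2 = -2 * (of R G a - 1) := by
  have h : of R G a * of R G a = 1 := by rw [← map_mul, ha, map_one]
  linear_combination h

theorem one_add_smul_mul_one_add_smul (ha : a * a = 1) (s t : R) :
    (1 + s • (of R G a - 1)) * (1 + t • (of R G a - 1)) =
      1 + (s + t - 2 * s * t) • (of R G a - 1) := by
  simp only [Algebra.smul_def, map_sub, map_add, map_mul, map_ofNat]
  linear_combination
    (algebraMap R (MonoidAlgebra R G) s * algebraMap R _ t) * of_sub_one_sq (R := R) ha

theorem one_add_smul_eq (s : R) :
    1 + s • (of R G a - 1) = (single 1 (1 - s) + single a s : MonoidAlgebra R G) := by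
  simp only [one_def, of_apply, smul_sub, smul_single, smul_eq_mul, mul_one, single_sub]
  abel

theorem aug_one_add_smul (s : R) : aug R G (1 + s • (of R G a - 1)) = 1 := by
  simp [aug]

theorem coeff_one_add_smul (hne : a ≠ 1) (s : R) : (1 + s • (of R G a - 1)).coeff a = s := by
  rw [one_add_smul_eq]
  simp [coeff_add, coeff_single, hne]

theorem eq_one_add_smul_of_aug_eq_one (hne : a ≠ 1) (hgen : ∀ g : G, g = 1 ∨ g = a)
    {x : MonoidAlgebra R G} (hx : aug R G x = 1) : x = 1 + x.coeff a • (of R G a - 1) := by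
  have hx' : x = single 1 (x.coeff 1) + single a (x.coeff a) := by
    ext g
    rcases hgen g with rfl | rfl <;> simp [coeff_add, coeff_single, hne, hne.symm]
  have hsum : x.coeff 1 + x.coeff a = 1 := by
    rw [hx', map_add, aug, lift_single, lift_single] at hx
    simpa using hx
  rw [one_add_smul_eq, ← eq_sub_of_add_eq hsum]
  exact hx'

theorem one_add_smul_injective (hne : a ≠ 1) :
    Function.Injective fun s : R => 1 + s • (of R G a - 1) := fun s t h => by
  simpa only [coeff_one_add_smul hne] using congr(($h).coeff a)

theorem one_add_smul_eq_one_iff (hne : a ≠ 1) {s : R} : 1 + s • (of R G a - 1) = 1 ↔ s = 0 :=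
  (one_add_smul_injective hne).eq_iff' (b := 0) (by simp)

theorem of_mul_one_add_smul (ha : a * a = 1) (s : R) :
    of R G a * (1 + s • (of R G a - 1)) = 1 + (1 - s) • (of R G a - 1) := by
  have h := one_add_smul_mul_one_add_smul ha 1 s
  rw [one_smul, add_sub_cancel] at h
  rw [h]
  congr 2
  ring

theorem exists_one_add_two_smul_pow (ha : a * a = 1) (j : ℕ) :
    ∃ t : R, (1 + (2 : R) • (of R G a - 1)) ^ j = 1 + (2 * t) • (of R G a - 1) := by
  induction j with
  | zero => exact ⟨0, by simp⟩
  | succ j ih =>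
    obtain ⟨t, ht⟩ := ih
    refine ⟨t + 1 - 4 * t, ?_⟩
    rw [pow_succ, ht, one_add_smul_mul_one_add_smul ha]
    congr 2
    ring

theorem exists_odd_one_add_two_smul_pow_two_pow (ha : a * a = 1) (m : ℕ) :
    ∃ c : ℤ, Odd c ∧ (1 + (2 : R) • (of R G a - 1)) ^ 2 ^ m =
      1 + ((2 ^ (m + 1) * c : ℤ) : R) • (of R G a - 1) := by
  induction m with
  | zero => exact ⟨1, odd_one, by simp⟩
  | succ m ih =>
    obtain ⟨c, hc, hpow⟩ := ih
    refine ⟨c * (1 - 2 ^ (m + 1) * c), hc.mul (odd_one.sub_even ⟨2 ^ m * c, by ring⟩), ?_⟩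
    rw [pow_succ, pow_mul, hpow, sq, one_add_smul_mul_one_add_smul ha]
    congr 2
    push_cast
    ring

theorem val_iota (g : G) : (iota R G g : MonoidAlgebra R G) = of R G g := rfl

theorem mem_Vgrp_iff {v : (MonoidAlgebra R G)ˣ} : v ∈ Vgrp R G ↔ aug R G v = 1 := by
  simp [Vgrp, MonoidHom.mem_ker, Units.ext_iff]

theorem mem_Vgrp_of_val_eq {v : (MonoidAlgebra R G)ˣ} {s : R}
    (hv : (v : MonoidAlgebra R G) = 1 + s • (of R G a - 1)) : v ∈ Vgrp R G := by
  rw [mem_Vgrp_iff, hv, aug_one_add_smul]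

theorem coeff_injective_Vgrp (hne : a ≠ 1) (hgen : ∀ g : G, g = 1 ∨ g = a) :
    Function.Injective fun v : Vgrp R G =>
      ((v : (MonoidAlgebra R G)ˣ) : MonoidAlgebra R G).coeff a := by
  intro v w h
  have hv := eq_one_add_smul_of_aug_eq_one hne hgen (mem_Vgrp_iff.1 v.2)
  have hw := eq_one_add_smul_of_aug_eq_one hne hgen (mem_Vgrp_iff.1 w.2)
  simp only at h
  rw [h] at hv
  exact Subtype.ext (Units.ext (hv.trans hw.symm))

variable {e : ℕ}

theorem orderOf_one_add_two_smul (ha : a * a = 1) (hne : a ≠ 1) :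
    orderOf (1 + (2 : ZMod (2 ^ e)) • (of (ZMod (2 ^ e)) G a - 1)) = 2 ^ (e - 1) := by
  refine orderOf_eq_prime_pow_of_forall fun m => ?_
  obtain ⟨c, hc, hpow⟩ := exists_odd_one_add_two_smul_pow_two_pow (R := ZMod (2 ^ e)) ha m
  rw [hpow, one_add_smul_eq_one_iff hne,
    ZMod.intCast_two_pow_mul_eq_zero_iff hc]
  omega

theorem iota_pow_mul_pow_injective (he : e ≠ 0) (ha : a * a = 1) (hne : a ≠ 1)
    {u : (MonoidAlgebra (ZMod (2 ^ e)) G)ˣ}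
    (hu : (u : MonoidAlgebra (ZMod (2 ^ e)) G) =
      1 + (2 : ZMod (2 ^ e)) • (of (ZMod (2 ^ e)) G a - 1)) :
    Function.Injective fun p : Fin 2 × Fin (orderOf u) =>
      iota (ZMod (2 ^ e)) G a ^ (p.1 : ℕ) * u ^ (p.2 : ℕ) := by
  have hpow (j : ℕ) : ∃ t : ZMod (2 ^ e), ((u ^ j : (MonoidAlgebra (ZMod (2 ^ e)) G)ˣ) :
      MonoidAlgebra (ZMod (2 ^ e)) G) = 1 + (2 * t) • (of (ZMod (2 ^ e)) G a - 1) := by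
    rw [Units.val_pow_eq_pow_val, hu]
    exact exists_one_add_two_smul_pow ha j
  have hodd (j k : ℕ) : iota (ZMod (2 ^ e)) G a * u ^ j ≠ u ^ k := fun h => by
    obtain ⟨t, ht⟩ := hpow j
    obtain ⟨t', ht'⟩ := hpow k
    have h' := congrArg Units.val h
    rw [Units.val_mul, ht, ht', val_iota, of_mul_one_add_smul ha] at h'
    exact ZMod.two_mul_ne_one_sub_two_mul he t' t (one_add_smul_injective hne h').symm
  rintro ⟨i, j⟩ ⟨i', j'⟩ h
  simp only at h
  have hi : i = i' := by
    fin_cases i <;> fin_cases i'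
    · rfl
    · exact (hodd j' j (by simpa using h.symm)).elim
    · exact (hodd j j' (by simpa using h)).elim
    · rfl
  subst hi
  have hj := pow_injOn_Iio_orderOf j.isLt j'.isLt (mul_left_cancel h)
  exact Prod.ext rfl (Fin.ext hj)

end GroupRingOfOrderTwo

open GroupRingOfOrderTwo

theorem stmt_15_general (e : ℕ) (he : 1 ≤ e)
    (G : Type*) [CommGroup G] (a : G)
    (ha : orderOf a = 2) (hgen : ∀ g : G, g = 1 ∨ g = a) :
    (MonoidAlgebra.of (ZMod (2 ^ e)) G a - 1) ^ 2 =
        -(2 : MonoidAlgebra (ZMod (2 ^ e)) G) * (MonoidAlgebra.of (ZMod (2 ^ e)) G a - 1) ∧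
      ∃ u : (MonoidAlgebra (ZMod (2 ^ e)) G)ˣ,
        (u : MonoidAlgebra (ZMod (2 ^ e)) G) =
            1 + 2 * (MonoidAlgebra.of (ZMod (2 ^ e)) G a - 1) ∧
          orderOf u = 2 ^ (e - 1) ∧
          u ∈ Vgrp (ZMod (2 ^ e)) G ∧
          (∀ v ∈ Vgrp (ZMod (2 ^ e)) G, ∃ i j : ℕ,
            v = iota (ZMod (2 ^ e)) G a ^ i * u ^ j) ∧
          Nat.card (Vgrp (ZMod (2 ^ e)) G) = 2 ^ e := by
  have ha2 : a * a = 1 := by rw [← sq, ← ha, pow_orderOf_eq_one]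
  have hne : a ≠ 1 := by rintro rfl; simp at ha
  have hx := orderOf_one_add_two_smul (e := e) ha2 hne
  have hunit := IsUnit.of_pow_eq_one (pow_orderOf_eq_one _) (by rw [hx]; positivity)
  set u := hunit.unit
  have hu := hunit.unit_spec
  have hu_ord : orderOf u = 2 ^ (e - 1) := by rw [← orderOf_units, hu, hx]
  have hu_mem : u ∈ Vgrp (ZMod (2 ^ e)) G := mem_Vgrp_of_val_eq hu
  have ha_mem : iota (ZMod (2 ^ e)) G a ∈ Vgrp (ZMod (2 ^ e)) G :=
    mem_Vgrp_of_val_eq (s := 1) (by rw [val_iota, one_smul, add_sub_cancel])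
  have : Finite (Vgrp (ZMod (2 ^ e)) G) := Finite.of_injective _ (coeff_injective_Vgrp hne hgen)
  let f (p : Fin 2 × Fin (orderOf u)) : Vgrp (ZMod (2 ^ e)) G :=
    ⟨_, mul_mem (pow_mem ha_mem p.1) (pow_mem hu_mem p.2)⟩
  have hcard : Nat.card (Fin 2 × Fin (orderOf u)) = 2 ^ e := by
    rw [Nat.card_prod, Nat.card_fin, Nat.card_fin, hu_ord, ← pow_succ', Nat.sub_add_cancel he]
  have hf : Function.Bijective f := by
    refine Function.Injective.bijective_of_nat_card_le (fun p q h => ?_) ?_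
    · exact iota_pow_mul_pow_injective (by omega) ha2 hne hu (congrArg Subtype.val h)
    · rw [hcard]
      exact (Nat.card_le_card_of_injective _ (coeff_injective_Vgrp hne hgen)).trans_eq
        (Nat.card_zmod _)
  refine ⟨of_sub_one_sq ha2, u, by rw [hu, two_smul, two_mul], hu_ord, hu_mem,
    fun v hv => ?_, ?_⟩
  · obtain ⟨⟨i, j⟩, hij⟩ := hf.2 ⟨v, hv⟩
    exact ⟨i, j, congrArg Subtype.val hij.symm⟩
  · rw [← Nat.card_eq_of_bijective f hf, hcard]

/-- For `G = ⟨a⟩` cyclic of order `2`: `(a-1)^2 = -2(a-1)` in `Z_{2^e}G`, the unit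
`1 + 2(a-1)` has order `2^{e-1}`, and `V(Z_{2^e}G) = ⟨a⟩ × ⟨1 + 2(a-1)⟩ ≅
C_2 × C_{2^{e-1}}`. -/
theorem stmt_15 (e : ℕ) (he : 1 ≤ e)
    (G : Type*) [CommGroup G] [Fintype G] (a : G)
    (ha : orderOf a = 2) (hgen : ∀ g : G, g = 1 ∨ g = a) :
    (MonoidAlgebra.of (ZMod (2 ^ e)) G a - 1) ^ 2 =
        -(2 : MonoidAlgebra (ZMod (2 ^ e)) G) * (MonoidAlgebra.of (ZMod (2 ^ e)) G a - 1) ∧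
      ∃ u : (MonoidAlgebra (ZMod (2 ^ e)) G)ˣ,
        (u : MonoidAlgebra (ZMod (2 ^ e)) G) =
            1 + 2 * (MonoidAlgebra.of (ZMod (2 ^ e)) G a - 1) ∧
          orderOf u = 2 ^ (e - 1) ∧
          u ∈ Vgrp (ZMod (2 ^ e)) G ∧
          (∀ v ∈ Vgrp (ZMod (2 ^ e)) G, ∃ i j : ℕ,
            v = iota (ZMod (2 ^ e)) G a ^ i * u ^ j) ∧
          Nat.card (Vgrp (ZMod (2 ^ e)) G) = 2 ^ e :=
  stmt_15_general e he G a ha hgen
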